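/- arXiv:1905.04214 — 2 statements merged into one kernel-verified Lean document; each statement's English description precedes it below -/
import Mathlib

section
/- Let X ⊆ ℝ^m be a nonempty closed convex set, let ω : X → ℝ be continuously differentiable and σ-strongly convex with σ > 0, and define the Bregman divergence ν(a,b) = ω(b) − ω(a) − ⟨∇ω(a), b − a⟩ for a, b ∈ X. Let y ∈ X, g ∈ ℝ^m, α > 0, and let x⁺ be a minimizer over u ∈ X of ⟨g, u⟩ + (1/α) ν(y, u). Then ‖x⁺ − y‖ ≤ (α/σ) ‖g‖. -/
/-!
The first-order optimality condition for `x⁺` on the convex set `X`, applied in the direction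
`y - x⁺`, reads `⟨α g + ∇ω(x⁺) - ∇ω(y), y - x⁺⟩ ≥ 0`. Combined with strong convexity and
Cauchy–Schwarz this gives `σ ‖x⁺ - y‖² ≤ ⟨∇ω(x⁺) - ∇ω(y), x⁺ - y⟩ ≤ α ‖g‖ ‖x⁺ - y‖`.
-/

open scoped RealInnerProductSpace

section InnerProductSpace

variable {E : Type*} [NormedAddCommGroup E] [InnerProductSpace ℝ E] [CompleteSpace E]

theorem IsMinOn.inner_gradient_sub_nonneg {f : E → ℝ} {s : Set E} {x y f' : E}
    (hmin : IsMinOn f s x) (hf : HasGradientAt f f' x) (hs : Convex ℝ s) (hx : x ∈ s)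
    (hy : y ∈ s) : 0 ≤ ⟪f', y - x⟫ := by
  simpa using hmin.localize.hasFDerivWithinAt_nonneg hf.hasFDerivAt.hasFDerivWithinAt
    (sub_mem_posTangentConeAt_of_segment_subset (hs.segment_subset hx hy))

theorem hasGradientAt_inner_add_bregman {w : E → ℝ} {x y g c p : E} {α : ℝ}
    (hw : HasGradientAt w p x) :
    HasGradientAt (fun u ↦ ⟪g, u⟫ + (1 / α) * (w u - w y - ⟪c, u - y⟫))
      (g + (1 / α) • (p - c)) x := by
  rw [hasGradientAt_iff_hasFDerivAt] at hw ⊢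
  have hinner (v : E) : HasFDerivAt (⟪v, ·⟫) (InnerProductSpace.toDual ℝ E v) x :=
    (InnerProductSpace.toDual ℝ E v).hasFDerivAt
  have hsum := (hinner g).add
    (((hw.sub_const (w y)).sub ((hinner c).sub_const ⟪c, y⟫)).const_mul (1 / α))
  have hdual : InnerProductSpace.toDual ℝ E (g + (1 / α) • (p - c)) =
      InnerProductSpace.toDual ℝ E g + (1 / α) •
        (InnerProductSpace.toDual ℝ E p - InnerProductSpace.toDual ℝ E c) := by
    ext v
    simp
  rw [hdual]
  refine hsum.congr_of_eventuallyEq (Filter.Eventually.of_forall fun u ↦ ?_)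
  simp [inner_sub_right]

end InnerProductSpace

theorem le_div_of_mul_sq_le_mul {σ c t : ℝ} (hσ : 0 < σ) (hc : 0 ≤ c) (ht : 0 ≤ t)
    (h : σ * t ^ 2 ≤ c * t) : t ≤ c / σ := by
  rw [le_div_iff₀ hσ]
  rcases ht.eq_or_lt with rfl | ht
  · simpa using hc
  · nlinarith

theorem prox_step_bound_general {m : ℕ}
    (X : Set (EuclideanSpace ℝ (Fin m)))
    (hXconvex : Convex ℝ X)
    (w : EuclideanSpace ℝ (Fin m) → ℝ)
    (gradw : EuclideanSpace ℝ (Fin m) → EuclideanSpace ℝ (Fin m))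
    (hgrad : ∀ a ∈ X, HasGradientAt w (gradw a) a)
    (σ : ℝ) (hσ : 0 < σ)
    (hstrong : ∀ a ∈ X, ∀ b ∈ X, σ * ‖a - b‖ ^ 2 ≤ ⟪gradw a - gradw b, a - b⟫)
    (ν : EuclideanSpace ℝ (Fin m) → EuclideanSpace ℝ (Fin m) → ℝ)
    (hν : ∀ a b, ν a b = w b - w a - ⟪gradw a, b - a⟫)
    (y : EuclideanSpace ℝ (Fin m)) (hy : y ∈ X)
    (g : EuclideanSpace ℝ (Fin m)) (α : ℝ) (hα : 0 < α)
    (xp : EuclideanSpace ℝ (Fin m)) (hxpX : xp ∈ X)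
    (hxpmin : ∀ u ∈ X, ⟪g, xp⟫ + (1 / α) * ν y xp ≤ ⟪g, u⟫ + (1 / α) * ν y u) :
    ‖xp - y‖ ≤ α / σ * ‖g‖ := by
  have hmin : IsMinOn (fun u ↦ ⟪g, u⟫ + (1 / α) * (w u - w y - ⟪gradw y, u - y⟫)) X xp :=
    isMinOn_iff.2 fun u hu ↦ by simpa only [hν] using hxpmin u hu
  have hopt := hmin.inner_gradient_sub_nonneg
    (hasGradientAt_inner_add_bregman (hgrad xp hxpX)) hXconvex hxpX hy
  have hmono : ⟪gradw xp - gradw y, xp - y⟫ ≤ α * ⟪g, y - xp⟫ := by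
    have hflip : ⟪gradw xp - gradw y, y - xp⟫ = -⟪gradw xp - gradw y, xp - y⟫ := by
      rw [← inner_neg_right, neg_sub]
    rw [inner_add_left, real_inner_smul_left, hflip] at hopt
    have hscale : α * ⟪g, y - xp⟫ - ⟪gradw xp - gradw y, xp - y⟫ =
        α * (⟪g, y - xp⟫ + 1 / α * -⟪gradw xp - gradw y, xp - y⟫) := by
      field_simp
      ring
    linarith [mul_nonneg hα.le hopt]
  have hbound : σ * ‖xp - y‖ ^ 2 ≤ α * ‖g‖ * ‖xp - y‖ :=
    calc σ * ‖xp - y‖ ^ 2 ≤ ⟪gradw xp - gradw y, xp - y⟫ := hstrong xp hxpX y hy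
      _ ≤ α * ⟪g, y - xp⟫ := hmono
      _ ≤ α * (‖g‖ * ‖y - xp‖) := by gcongr; exact real_inner_le_norm g _
      _ = α * ‖g‖ * ‖xp - y‖ := by rw [norm_sub_rev]; ring
  rw [div_mul_eq_mul_div]
  exact le_div_of_mul_sq_le_mul hσ (by positivity) (norm_nonneg _) hbound

/-- **Proximal step bound.**  Let `X ⊆ ℝ^m` be nonempty closed convex, `ω : X → ℝ`
continuously differentiable and `σ`-strongly convex (`⟨∇ω(a) − ∇ω(b), a − b⟩ ≥ σ‖a−b‖²`
on `X`), with Bregman divergence `ν(a,b) = ω(b) − ω(a) − ⟨∇ω(a), b − a⟩`.  If `y ∈ X`,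
`g ∈ ℝ^m`, `α > 0` and `x⁺` minimizes `⟨g,u⟩ + (1/α) ν(y,u)` over `u ∈ X`, then
`‖x⁺ − y‖ ≤ (α/σ) ‖g‖`. -/
theorem prox_step_bound {m : ℕ}
    (X : Set (EuclideanSpace ℝ (Fin m)))
    (hXne : X.Nonempty) (hXclosed : IsClosed X) (hXconvex : Convex ℝ X)
    (w : EuclideanSpace ℝ (Fin m) → ℝ)
    (gradw : EuclideanSpace ℝ (Fin m) → EuclideanSpace ℝ (Fin m))
    (hgrad : ∀ a ∈ X, HasGradientAt w (gradw a) a)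
    (hgradcont : ContinuousOn gradw X)
    (σ : ℝ) (hσ : 0 < σ)
    (hstrong : ∀ a ∈ X, ∀ b ∈ X, σ * ‖a - b‖ ^ 2 ≤ ⟪gradw a - gradw b, a - b⟫)
    (ν : EuclideanSpace ℝ (Fin m) → EuclideanSpace ℝ (Fin m) → ℝ)
    (hν : ∀ a b, ν a b = w b - w a - ⟪gradw a, b - a⟫)
    (y : EuclideanSpace ℝ (Fin m)) (hy : y ∈ X)
    (g : EuclideanSpace ℝ (Fin m)) (α : ℝ) (hα : 0 < α)
    (xp : EuclideanSpace ℝ (Fin m)) (hxpX : xp ∈ X)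
    (hxpmin : ∀ u ∈ X, ⟪g, xp⟫ + (1 / α) * ν y xp ≤ ⟪g, u⟫ + (1 / α) * ν y u) :
    ‖xp - y‖ ≤ α / σ * ‖g‖ :=
  prox_step_bound_general X hXconvex w gradw hgrad σ hσ hstrong ν hν y hy g α hα xp hxpX hxpmin
end

section
/- Let W ∈ ℝ^{N×N} be a row-stochastic matrix with w_ii ≥ η > 0 for all i, every nonzero off-diagonal entry w_ij ≥ η, and such that the directed graph induced by the nonzero off-diagonal entries of W is strongly connected. Let Π = diag(π_1, …, π_N) with π_i ∈ (0,1] for all i. Then the matrix Ŵ = I − Π + Π W is row-stochastic, satisfies Ŵ ≥ η I entrywise on the diagonal (i.e., Ŵ_ii ≥ η for all i), and Ŵ contains a δ-spanning tree for δ = η · min_i π_i. -/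
/-!
Row `i` of `Ŵ = I - Π + Π W` is the convex combination `(1 - π i) eᵢ + π i Wᵢ`, so `Ŵ` is row
stochastic and `Ŵ i i ≥ η` because both `1` and `W i i` are at least `η`. Off the diagonal
`Ŵ i j = π i W i j ≥ η min π` wherever `W i j ≠ 0`, so every edge of the strongly connected graph
of `W` is an edge of the graph of `Ŵ_δ`, and any vertex is the root of a spanning tree.
-/

open Finset

noncomputable section

/-- A nonnegative matrix `A` contains a `δ`-spanning tree: in the directed graph with an
edge from `a` to `b` whenever `A a b ≥ δ` (the graph induced by `A_δ`), there is a vertex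
`v` from which every vertex is reachable by a directed path. -/
def HasDeltaSpanningTree {N : ℕ} (A : Fin N → Fin N → ℝ) (δ : ℝ) : Prop :=
  ∃ v : Fin N, ∀ u : Fin N, Relation.ReflTransGen (fun a b => δ ≤ A a b) v u

namespace Matrix

variable {ι R : Type*} [Fintype ι] [DecidableEq ι] [CommRing R]

def lazy (π : ι → R) (W : Matrix ι ι R) : Matrix ι ι R :=
  1 - diagonal π + diagonal π * W

variable {π : ι → R} {W : Matrix ι ι R}

theorem lazy_apply (i j : ι) :
    lazy π W i j = (if i = j then 1 - π i else 0) + π i * W i j := by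
  by_cases h : i = j <;> simp [lazy, h]

theorem lazy_apply_of_ne {i j : ι} (h : i ≠ j) : lazy π W i j = π i * W i j := by
  simp [lazy_apply, h]

variable [LinearOrder R] [IsStrictOrderedRing R]

theorem lazy_mem_rowStochastic (hπ : ∀ i, π i ∈ Set.Icc 0 1) (hW : W ∈ rowStochastic R ι) :
    lazy π W ∈ rowStochastic R ι := by
  refine mem_rowStochastic.2 ⟨fun i j => ?_, ?_⟩
  · have hWπ : 0 ≤ π i * W i j := mul_nonneg (hπ i).1 (nonneg_of_mem_rowStochastic hW)
    rw [lazy_apply]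
    split_ifs <;> linarith [(hπ i).2]
  · rw [lazy, add_mulVec, sub_mulVec, ← mulVec_mulVec, one_vecMul_of_mem_rowStochastic hW,
      one_mulVec, sub_add_cancel]

theorem le_lazy_apply_self {η : R} (hπ : ∀ i, π i ∈ Set.Icc 0 1) (hW : W ∈ rowStochastic R ι)
    {i : ι} (hη : η ≤ W i i) : η ≤ lazy π W i i := by
  have hW1 : W i i ≤ 1 := le_one_of_mem_rowStochastic hW
  rw [lazy_apply, if_pos rfl]
  -- `1 - π + π w - η = (1 - π) (1 - η) + π (w - η)`
  linarith [mul_nonneg (sub_nonneg.2 (hπ i).2) (sub_nonneg.2 (hη.trans hW1)),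
    mul_nonneg (hπ i).1 (sub_nonneg.2 hη)]

end Matrix

open Matrix

theorem hasDeltaSpanningTree_of_forall_reflTransGen {N : ℕ} [NeZero N]
    {A : Fin N → Fin N → ℝ} {δ : ℝ} {r : Fin N → Fin N → Prop}
    (hr : ∀ i j, Relation.ReflTransGen r i j) (hδ : ∀ a b, r a b → δ ≤ A a b) :
    HasDeltaSpanningTree A δ :=
  ⟨0, fun u => Relation.ReflTransGen.mono hδ _ _ (hr 0 u)⟩

/-- **Lazy consensus matrices keep a spanning tree.**
Let `W` be row stochastic with `w_ii ≥ η > 0`, every nonzero off-diagonal entry `≥ η`,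
and the directed graph induced by the nonzero off-diagonal entries strongly connected.
Let `Π = diag(π_1,…,π_N)` with `π_i ∈ (0,1]`.  Then `Ŵ = I − Π + Π W` is row
stochastic, has diagonal entries `≥ η`, and contains a `δ`-spanning tree for
`δ = η · min_i π_i`. -/
theorem lazy_consensus_spanning_tree
    {N : ℕ} [NeZero N] (W : Fin N → Fin N → ℝ) (η : ℝ) (hη : 0 < η)
    (hWnonneg : ∀ i j, 0 ≤ W i j)
    (hWrow : ∀ i, ∑ j, W i j = 1)
    (hWdiag : ∀ i, η ≤ W i i)
    (hWpos : ∀ i j, i ≠ j → W i j ≠ 0 → η ≤ W i j)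
    (hWconn : ∀ i j : Fin N,
      Relation.ReflTransGen (fun a b => a ≠ b ∧ W a b ≠ 0) i j)
    (π : Fin N → ℝ) (hπ : ∀ i, π i ∈ Set.Ioc (0 : ℝ) 1)
    (Wh : Fin N → Fin N → ℝ)
    (hWh : ∀ i j, Wh i j = (if i = j then 1 - π i else 0) + π i * W i j) :
    (∀ i j, 0 ≤ Wh i j) ∧ (∀ i, ∑ j, Wh i j = 1) ∧ (∀ i, η ≤ Wh i i) ∧
      HasDeltaSpanningTree Wh (η * ⨅ i, π i) := by
  have hW : W ∈ rowStochastic ℝ (Fin N) := mem_rowStochastic_iff_sum.2 ⟨hWnonneg, hWrow⟩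
  have hπ01 : ∀ i, π i ∈ Set.Icc 0 1 := fun i => Set.Ioc_subset_Icc_self (hπ i)
  obtain rfl : Wh = lazy π W := funext₂ fun i j => (hWh i j).trans (lazy_apply i j).symm
  have hlazy : lazy π W ∈ rowStochastic ℝ (Fin N) := lazy_mem_rowStochastic hπ01 hW
  refine ⟨fun i j => nonneg_of_mem_rowStochastic hlazy, sum_row_of_mem_rowStochastic hlazy,
    fun i => le_lazy_apply_self hπ01 hW (hWdiag i),
    hasDeltaSpanningTree_of_forall_reflTransGen hWconn ?_⟩
  rintro a b ⟨hab, hWab⟩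
  refine le_of_le_of_eq ?_ (lazy_apply_of_ne hab).symm
  calc η * ⨅ i, π i ≤ η * π a :=
        mul_le_mul_of_nonneg_left (ciInf_le (Set.finite_range π).bddBelow a) hη.le
    _ ≤ π a * W a b := by
        rw [mul_comm]; exact mul_le_mul_of_nonneg_left (hWpos a b hab hWab) (hπ a).1.le
end
end
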